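/- arXiv:1610.05417 — 3 statements merged into one kernel-verified Lean document; each statement's English description precedes it below -/
import Mathlib

section
/- If φ : ℝ × ℝ → ℝ is positive, smooth, and solves the heat equation ∂_t φ = ν ∂_{xx} φ, then u(x,t) = -2ν (∂_x φ)/φ solves the viscous Burgers' equation ∂_t u = ν ∂_{xx} u - u ∂_x u. -/
noncomputable def pX (φ : ℝ → ℝ → ℝ) (x t : ℝ) : ℝ :=
  fderiv ℝ (fun p : ℝ × ℝ => φ p.1 p.2) (x, t) (1, 0)

noncomputable def pT (φ : ℝ → ℝ → ℝ) (x t : ℝ) : ℝ :=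
  fderiv ℝ (fun p : ℝ × ℝ => φ p.1 p.2) (x, t) (0, 1)

lemma hasDerivAt_pX {φ : ℝ → ℝ → ℝ} (hφ : ContDiff ℝ (⊤ : ℕ∞) fun p : ℝ × ℝ => φ p.1 p.2)
    (x t : ℝ) : HasDerivAt (fun y => φ y t) (pX φ x t) x := by
  have h1 : HasFDerivAt (fun p : ℝ × ℝ => φ p.1 p.2)
      (fderiv ℝ (fun p : ℝ × ℝ => φ p.1 p.2) (x, t)) (x, t) :=
    (hφ.differentiable (by simp) (x, t)).hasFDerivAt
  have h2 : HasDerivAt (fun y : ℝ => (y, t)) ((1 : ℝ), (0 : ℝ)) x :=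
    HasDerivAt.prodMk (hasDerivAt_id x) (hasDerivAt_const x t)
  exact h1.comp_hasDerivAt x h2

lemma hasDerivAt_pT {φ : ℝ → ℝ → ℝ} (hφ : ContDiff ℝ (⊤ : ℕ∞) fun p : ℝ × ℝ => φ p.1 p.2)
    (x t : ℝ) : HasDerivAt (fun s => φ x s) (pT φ x t) t := by
  have h1 : HasFDerivAt (fun p : ℝ × ℝ => φ p.1 p.2)
      (fderiv ℝ (fun p : ℝ × ℝ => φ p.1 p.2) (x, t)) (x, t) :=
    (hφ.differentiable (by simp) (x, t)).hasFDerivAt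
  have h2 : HasDerivAt (fun s : ℝ => (x, s)) ((0 : ℝ), (1 : ℝ)) t :=
    HasDerivAt.prodMk (hasDerivAt_const t x) (hasDerivAt_id t)
  exact h1.comp_hasDerivAt t h2

lemma contDiff_pX {φ : ℝ → ℝ → ℝ} (hφ : ContDiff ℝ (⊤ : ℕ∞) fun p : ℝ × ℝ => φ p.1 p.2) :
    ContDiff ℝ (⊤ : ℕ∞) fun p : ℝ × ℝ => pX φ p.1 p.2 :=
  (hφ.fderiv_right (by simp)).clm_apply contDiff_const

lemma contDiff_pT {φ : ℝ → ℝ → ℝ} (hφ : ContDiff ℝ (⊤ : ℕ∞) fun p : ℝ × ℝ => φ p.1 p.2) :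
    ContDiff ℝ (⊤ : ℕ∞) fun p : ℝ × ℝ => pT φ p.1 p.2 :=
  (hφ.fderiv_right (by simp)).clm_apply contDiff_const

lemma pT_pX_comm {φ : ℝ → ℝ → ℝ} (hφ : ContDiff ℝ (⊤ : ℕ∞) fun p : ℝ × ℝ => φ p.1 p.2)
    (x t : ℝ) : pT (pX φ) x t = pX (pT φ) x t := by
  set G : ℝ × ℝ → ℝ := fun p => φ p.1 p.2 with hG
  have hdG : Differentiable ℝ (fderiv ℝ G) := (hφ.fderiv_right (m := (⊤ : ℕ∞)) (by simp)).differentiable (by simp)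
  have key : ∀ v w : ℝ × ℝ,
      fderiv ℝ (fun q => fderiv ℝ G q v) (x, t) w = fderiv ℝ (fderiv ℝ G) (x, t) w v := by
    intro v w
    rw [fderiv_clm_apply (hdG (x, t)) (differentiableAt_const v)]
    simp
  have hsymm := second_derivative_symmetric
    (f := G) (f' := fderiv ℝ G) (f'' := fderiv ℝ (fderiv ℝ G) (x, t)) (x := (x, t))
    (fun y => (hφ.differentiable (by simp) y).hasFDerivAt) (hdG (x, t)).hasFDerivAt
  have e1 : pT (pX φ) x t = fderiv ℝ (fun q => fderiv ℝ G q (1, 0)) (x, t) (0, 1) := rfl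
  have e2 : pX (pT φ) x t = fderiv ℝ (fun q => fderiv ℝ G q (0, 1)) (x, t) (1, 0) := rfl
  rw [e1, e2, key, key, hsymm]

lemma pX_const_mul {ψ : ℝ → ℝ → ℝ} (hψ : ContDiff ℝ (⊤ : ℕ∞) fun p : ℝ × ℝ => ψ p.1 p.2)
    (c x t : ℝ) : pX (fun a b => c * ψ a b) x t = c * pX ψ x t := by
  show fderiv ℝ (fun p : ℝ × ℝ => c * ψ p.1 p.2) (x, t) (1, 0) = _
  rw [fderiv_const_mul (hψ.differentiable (by simp) (x, t)) c]
  simp [pX]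

/-- Hopf–Cole transformation: if `φ` is positive, smooth and solves the heat
equation `∂_t φ = ν ∂_{xx} φ`, then `u = -2ν (∂_x φ)/φ` solves the viscous
Burgers' equation `∂_t u = ν ∂_{xx} u - u ∂_x u`. -/
theorem hopf_cole (ν : ℝ) (hν : 0 < ν) (φ : ℝ → ℝ → ℝ)
    (hφ : ContDiff ℝ (⊤ : ℕ∞) fun p : ℝ × ℝ => φ p.1 p.2)
    (hpos : ∀ x t, 0 < φ x t)
    (hheat : ∀ x t, deriv (fun s => φ x s) t = ν * deriv (deriv fun y => φ y t) x)
    (u : ℝ → ℝ → ℝ)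
    (hu : ∀ x t, u x t = -2 * ν * deriv (fun y => φ y t) x / φ x t) :
    ∀ x t, deriv (fun s => u x s) t =
      ν * deriv (deriv fun y => u y t) x - u x t * deriv (fun y => u y t) x := by
  intro x t
  have hsm1 : ContDiff ℝ (⊤ : ℕ∞) fun p : ℝ × ℝ => pX φ p.1 p.2 := contDiff_pX hφ
  have hsm2 : ContDiff ℝ (⊤ : ℕ∞) fun p : ℝ × ℝ => pX (pX φ) p.1 p.2 := contDiff_pX hsm1
  have dX : ∀ z s : ℝ, deriv (fun y => φ y s) z = pX φ z s :=
    fun z s => (hasDerivAt_pX hφ z s).deriv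
  have dX2 : ∀ z s : ℝ, deriv (fun y => pX φ y s) z = pX (pX φ) z s :=
    fun z s => (hasDerivAt_pX hsm1 z s).deriv
  -- heat equation in terms of pX / pT
  have heatc : ∀ z s : ℝ, pT φ z s = ν * pX (pX φ) z s := by
    intro z s
    have h1 := hheat z s
    rw [show (deriv fun y => φ y s) = fun y => pX φ y s from funext fun y => dX y s,
      dX2 z s] at h1
    exact ((hasDerivAt_pT hφ z s).deriv).symm.trans h1
  have heatx : ∀ z s : ℝ, pT (pX φ) z s = ν * pX (pX (pX φ)) z s := by
    intro z s
    rw [pT_pX_comm hφ z s,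
      show pT φ = fun a b => ν * pX (pX φ) a b from
        funext fun a => funext fun b => heatc a b,
      pX_const_mul hsm2 ν z s]
  have hne : φ x t ≠ 0 := ne_of_gt (hpos x t)
  -- spatial derivative of u
  have hU : ∀ y : ℝ, HasDerivAt (fun z => u z t)
      ((-2 * ν * pX (pX φ) y t * φ y t - -2 * ν * pX φ y t * pX φ y t) / φ y t ^ 2) y := by
    intro y
    have h1 : HasDerivAt (fun z => -2 * ν * pX φ z t) (-2 * ν * pX (pX φ) y t) y :=
      (hasDerivAt_pX hsm1 y t).const_mul _
    have h2 : HasDerivAt (fun z => φ z t) (pX φ y t) y := hasDerivAt_pX hφ y t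
    have h3 := h1.div h2 (ne_of_gt (hpos y t))
    have hfun : (fun z => u z t) = fun z => -2 * ν * pX φ z t / φ z t :=
      funext fun z => by rw [hu z t, dX z t]
    rw [hfun]; exact h3
  have dUfun : (deriv fun y => u y t)
      = fun y => (-2 * ν * pX (pX φ) y t * φ y t - -2 * ν * pX φ y t * pX φ y t) / φ y t ^ 2 :=
    funext fun y => (hU y).deriv
  -- second spatial derivative of u
  have hN : HasDerivAt
      (fun y => -2 * ν * pX (pX φ) y t * φ y t - -2 * ν * pX φ y t * pX φ y t)
      ((-2 * ν * pX (pX (pX φ)) x t * φ x t + -2 * ν * pX (pX φ) x t * pX φ x t)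
        - (-2 * ν * pX (pX φ) x t * pX φ x t + -2 * ν * pX φ x t * pX (pX φ) x t)) x := by
    have hA := ((hasDerivAt_pX hsm2 x t).const_mul (-2 * ν)).mul (hasDerivAt_pX hφ x t)
    have hB := ((hasDerivAt_pX hsm1 x t).const_mul (-2 * ν)).mul (hasDerivAt_pX hsm1 x t)
    exact hA.sub hB
  have hD : HasDerivAt (fun y => φ y t ^ 2) (2 * φ x t ^ 1 * pX φ x t) x := by
    simpa using (hasDerivAt_pX hφ x t).fun_pow 2
  have hQ := hN.fun_div hD (pow_ne_zero 2 hne)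
  -- time derivative of u
  have hUt : HasDerivAt (fun s => u x s)
      ((-2 * ν * pT (pX φ) x t * φ x t - -2 * ν * pX φ x t * pT φ x t) / φ x t ^ 2) t := by
    have h1 : HasDerivAt (fun s => -2 * ν * pX φ x s) (-2 * ν * pT (pX φ) x t) t :=
      (hasDerivAt_pT hsm1 x t).const_mul _
    have h2 : HasDerivAt (fun s => φ x s) (pT φ x t) t := hasDerivAt_pT hφ x t
    have h3 := h1.div h2 hne
    have hfun : (fun s => u x s) = fun s => -2 * ν * pX φ x s / φ x s :=
      funext fun s => by rw [hu x s, dX x s]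
    rw [hfun]; exact h3
  rw [hUt.deriv, (hU x).deriv, dUfun, hQ.deriv, hu x t, dX x t, heatc x t, heatx x t]
  have hne2 : φ x t ^ 2 ≠ 0 := pow_ne_zero 2 hne
  field_simp
  ring
end

section
/- For constants C₁ ≠ 0, C₂, C₃ ∈ ℝ and ν > 0, the function u(x,t) = (C₂ + 2ν C₁² tanh(C₂ t - C₁ x + C₃))/C₁ solves the viscous Burgers' equation ∂_t u = ν ∂_{xx} u - u ∂_x u on all of ℝ × ℝ. -/
/-! Since `tanh' = 1 - tanh ^ 2`, all derivatives of `u` are polynomials in `T = tanh θ` along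
the phase `θ = C₂ t - C₁ x + C₃`: `u_t = 2νC₁C₂(1 - T²)`, `u_x = -2νC₁²(1 - T²)` and
`u_xx = -4νC₁³T(1 - T²)`. In `ν u_xx - u u_x` the two multiples of `T(1 - T²)` cancel,
leaving `u_t`. -/

open Real

theorem hasDerivAt_tanh (x : ℝ) : HasDerivAt tanh (1 - tanh x ^ 2) x := by
  rw [show tanh = fun y => sinh y / cosh y from funext tanh_eq_sinh_div_cosh]
  refine ((hasDerivAt_sinh x).div (hasDerivAt_cosh x) (cosh_pos x).ne').congr_deriv ?_
  field_simp

section TanhProfile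

variable (A B a b c : ℝ)

theorem hasDerivAt_tanh_affine (x : ℝ) :
    HasDerivAt (fun y => tanh (a * y + b)) (a * (1 - tanh (a * x + b) ^ 2)) x := by
  have hlin : HasDerivAt (fun y => a * y + b) a x := by
    simpa using ((hasDerivAt_id x).const_mul a).add_const b
  exact ((hasDerivAt_tanh _).comp x hlin).congr_deriv (mul_comm _ _)

theorem deriv_tanh_profile :
    deriv (fun y => (A + B * tanh (a * y + b)) / c) =
      fun y => B * a * (1 - tanh (a * y + b) ^ 2) / c := by
  funext x
  convert ((hasDerivAt_tanh_affine a b x).const_mul B |>.const_add A |>.div_const c).deriv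
    using 2
  ring

theorem deriv_deriv_tanh_profile (x : ℝ) :
    deriv (deriv fun y => (A + B * tanh (a * y + b)) / c) x =
      -2 * B * a ^ 2 * tanh (a * x + b) * (1 - tanh (a * x + b) ^ 2) / c := by
  rw [deriv_tanh_profile]
  convert ((hasDerivAt_tanh_affine a b x).fun_pow 2 |>.const_sub 1 |>.const_mul (B * a)
    |>.div_const c).deriv using 1
  ring

end TanhProfile

theorem burgers_tanh_solution_general (ν C₁ C₂ C₃ : ℝ) (hC₁ : C₁ ≠ 0)
    (u : ℝ → ℝ → ℝ)
    (hu : ∀ x t, u x t =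
      (C₂ + 2 * ν * C₁ ^ 2 * Real.tanh (C₂ * t - C₁ * x + C₃)) / C₁) :
    ∀ x t, deriv (fun s => u x s) t =
      ν * deriv (deriv fun y => u y t) x - u x t * deriv (fun y => u y t) x := by
  intro x t
  have hut : (fun s => u x s) =
      fun s => (C₂ + 2 * ν * C₁ ^ 2 * tanh (C₂ * s + (C₃ - C₁ * x))) / C₁ :=
    funext fun s => by rw [hu]; ring_nf
  have hux : (fun y => u y t) =
      fun y => (C₂ + 2 * ν * C₁ ^ 2 * tanh (-C₁ * y + (C₂ * t + C₃))) / C₁ :=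
    funext fun y => by rw [hu]; ring_nf
  rw [hut, hux, deriv_deriv_tanh_profile, deriv_tanh_profile, deriv_tanh_profile, hu]
  beta_reduce
  rw [show C₂ * t - C₁ * x + C₃ = -C₁ * x + (C₂ * t + C₃) by ring,
    show C₂ * t + (C₃ - C₁ * x) = -C₁ * x + (C₂ * t + C₃) by ring]
  field_simp
  ring

/-- For constants `C₁ ≠ 0`, `C₂`, `C₃` and viscosity `ν > 0`, the function
`u(x,t) = (C₂ + 2ν C₁² tanh(C₂ t - C₁ x + C₃))/C₁` solves the viscous
Burgers' equation `∂_t u = ν ∂_{xx} u - u ∂_x u` on all of `ℝ × ℝ`. -/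
theorem burgers_tanh_solution (ν C₁ C₂ C₃ : ℝ) (hC₁ : C₁ ≠ 0) (hν : 0 < ν)
    (u : ℝ → ℝ → ℝ)
    (hu : ∀ x t, u x t =
      (C₂ + 2 * ν * C₁ ^ 2 * Real.tanh (C₂ * t - C₁ * x + C₃)) / C₁) :
    ∀ x t, deriv (fun s => u x s) t =
      ν * deriv (deriv fun y => u y t) x - u x t * deriv (fun y => u y t) x :=
  burgers_tanh_solution_general ν C₁ C₂ C₃ hC₁ u hu
end

section
/- Let p_r(c) = 1/(1 + exp(-2βhc)) and p_l(c) = 1 - p_r(c). If u and F are smooth functions of x, then p_l(F(x+h))u(x+h) + p_r(F(x-h))u(x-h) = u(x) + (h²/2)(u''(x) - 2β(F u)'(x)) + O(h⁴) as h → 0; in particular the odd-order terms h and h³ cancel in the sum. -/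
open Asymptotics Filter
open scoped ContDiff

lemma dtrw_step {f : ℝ → ℝ} {k : ℕ} (hf : Differentiable ℝ f) (h0 : f 0 = 0)
    (hd : (deriv f) =O[nhds 0] fun h : ℝ => h ^ k) :
    f =O[nhds 0] fun h : ℝ => h ^ (k + 1) := by
  rw [Asymptotics.isBigO_iff] at hd
  obtain ⟨C, hC⟩ := hd
  rw [Metric.eventually_nhds_iff] at hC
  obtain ⟨ε, hε, hb⟩ := hC
  rw [Asymptotics.isBigO_iff]
  refine ⟨|C|, Metric.eventually_nhds_iff.2 ⟨ε, hε, fun {h} hh => ?_⟩⟩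
  have habs : |h| < ε := by simpa [Real.dist_eq] using hh
  have key : ∀ t ∈ Metric.closedBall (0:ℝ) |h|, ‖deriv f t‖ ≤ |C| * |h| ^ k := by
    intro t ht
    have ht' : |t| ≤ |h| := by simpa [Real.dist_eq] using ht
    have h1 : dist t 0 < ε := by
      rw [Real.dist_eq, sub_zero]; exact lt_of_le_of_lt ht' habs
    calc ‖deriv f t‖ ≤ C * ‖t ^ k‖ := hb h1
      _ ≤ |C| * |h| ^ k := by
          have h2 : ‖t ^ k‖ = |t| ^ k := by rw [Real.norm_eq_abs, abs_pow]
          rw [h2]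
          have h3 : C * |t| ^ k ≤ |C| * |t| ^ k :=
            mul_le_mul_of_nonneg_right (le_abs_self C) (by positivity)
          exact h3.trans (mul_le_mul_of_nonneg_left
            (pow_le_pow_left₀ (abs_nonneg t) ht' k) (abs_nonneg C))
  have conv : Convex ℝ (Metric.closedBall (0:ℝ) |h|) := convex_closedBall _ _
  have mvt := conv.norm_image_sub_le_of_norm_hasDerivWithin_le
    (fun t _ => (hf t).hasDerivAt.hasDerivWithinAt) key
    (Metric.mem_closedBall_self (abs_nonneg h))
    (by rw [Metric.mem_closedBall, Real.dist_eq, sub_zero])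
  rw [h0, sub_zero, sub_zero] at mvt
  calc ‖f h‖ ≤ |C| * |h| ^ k * ‖h‖ := mvt
    _ = |C| * ‖h ^ (k+1)‖ := by
        rw [Real.norm_eq_abs, Real.norm_eq_abs, abs_pow, pow_succ]; ring

/-- Local truncation error of the DTRW scheme with single-point-quadrature
jump probabilities: for smooth `u` and `F`,
`p_l(F(x+h)) u(x+h) + p_r(F(x-h)) u(x-h)
  = u(x) + (h²/2)(u''(x) - 2β (F u)'(x)) + O(h⁴)` as `h → 0`. -/
theorem dtrw_truncation_error (β x : ℝ) (u F : ℝ → ℝ)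
    (hu : ContDiff ℝ (⊤ : ℕ∞) u) (hF : ContDiff ℝ (⊤ : ℕ∞) F) :
    (fun h : ℝ =>
        (1 - 1 / (1 + Real.exp (-(2 * β * h * F (x + h))))) * u (x + h) +
          (1 / (1 + Real.exp (-(2 * β * h * F (x - h))))) * u (x - h) -
          (u x + (h ^ 2 / 2) *
            (deriv (deriv u) x - 2 * β * deriv (fun y => F y * u y) x)))
      =O[nhds 0] fun h : ℝ => h ^ 4 := by
  set K : ℝ := deriv (deriv u) x - 2 * β * deriv (fun y => F y * u y) x with hK
  set Φ : ℝ → ℝ := fun h => u (x + h) / (1 + Real.exp (2 * β * h * F (x + h)))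
      - u x / 2 - h ^ 2 / 4 * K with hΦ
  -- representation of the goal function
  have hrepr : (fun h : ℝ =>
        (1 - 1 / (1 + Real.exp (-(2 * β * h * F (x + h))))) * u (x + h) +
          (1 / (1 + Real.exp (-(2 * β * h * F (x - h))))) * u (x - h) -
          (u x + (h ^ 2 / 2) *
            (deriv (deriv u) x - 2 * β * deriv (fun y => F y * u y) x)))
      = fun h : ℝ => Φ h + Φ (-h) := by
    funext h
    have e1 : (1 : ℝ) - 1 / (1 + Real.exp (-(2 * β * h * F (x + h))))
        = 1 / (1 + Real.exp (2 * β * h * F (x + h))) := by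
      rw [Real.exp_neg]
      have hp : (0:ℝ) < Real.exp (2 * β * h * F (x + h)) := Real.exp_pos _
      field_simp
      ring
    have e2 : x + -h = x - h := by ring
    have e3 : 2 * β * -h * F (x + -h) = -(2 * β * h * F (x - h)) := by rw [e2]; ring
    simp only [hΦ, e2, e3]
    rw [e1]
    rw [hK]
    ring
  rw [hrepr]
  -- basic differentiability facts
  have hus : ContDiff ℝ ∞ u := hu.of_le (by simp)
  have hFs : ContDiff ℝ ∞ F := hF.of_le (by simp)
  have hu' : Differentiable ℝ u := hus.differentiable (by norm_num)
  have hF' : Differentiable ℝ F := hFs.differentiable (by norm_num)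
  have hud : ContDiff ℝ ∞ (deriv u) := (contDiff_infty_iff_deriv.1 hus).2
  have hFd : ContDiff ℝ ∞ (deriv F) := (contDiff_infty_iff_deriv.1 hFs).2
  have hud' : Differentiable ℝ (deriv u) := hud.differentiable (by norm_num)
  have hFd' : Differentiable ℝ (deriv F) := hFd.differentiable (by norm_num)
  -- derivative of shifted composition
  have comp_add : ∀ g : ℝ → ℝ, Differentiable ℝ g →
      ∀ h : ℝ, HasDerivAt (fun t : ℝ => g (x + t)) (deriv g (x + h)) h := by
    intro g hg h
    have := (hg (x + h)).hasDerivAt.comp h ((hasDerivAt_id h).const_add x)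
    rw [mul_one] at this; exact this
  -- smoothness of Φ
  have hDpos : ∀ h : ℝ, (0:ℝ) < 1 + Real.exp (2 * β * h * F (x + h)) := by
    intro h; positivity
  have hinner : ContDiff ℝ ∞ (fun h : ℝ => 2 * β * h * F (x + h)) := by
    exact ((contDiff_const.mul contDiff_id).mul (hFs.comp (contDiff_const.add contDiff_id)))
  have hΦc : ContDiff ℝ ∞ Φ := by
    rw [hΦ]
    refine (((hus.comp (contDiff_const.add contDiff_id)).div
      (contDiff_const.add (Real.contDiff_exp.comp hinner))
      (fun h => (hDpos h).ne')).sub contDiff_const).sub ?_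
    exact ((contDiff_id.pow 2).div_const 4).mul contDiff_const
  -- first derivative of Φ, explicitly
  set Φ₁ : ℝ → ℝ := fun h =>
    (deriv u (x + h) * (1 + Real.exp (2 * β * h * F (x + h))) -
      u (x + h) * (Real.exp (2 * β * h * F (x + h)) *
        (2 * β * F (x + h) + 2 * β * h * deriv F (x + h)))) /
      (1 + Real.exp (2 * β * h * F (x + h))) ^ 2 - h / 2 * K with hΦ₁
  have ha : ∀ h : ℝ, HasDerivAt (fun t : ℝ => 2 * β * t * F (x + t))
      (2 * β * F (x + h) + 2 * β * h * deriv F (x + h)) h := by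
    intro h
    have h1 : HasDerivAt (fun t : ℝ => 2 * β * t) (2 * β) h := by
      simpa using (hasDerivAt_id h).const_mul (2 * β)
    have := h1.mul (comp_add F hF' h)
    exact this
  have hE : ∀ h : ℝ, HasDerivAt (fun t : ℝ => Real.exp (2 * β * t * F (x + t)))
      (Real.exp (2 * β * h * F (x + h)) *
        (2 * β * F (x + h) + 2 * β * h * deriv F (x + h))) h := fun h => (ha h).exp
  have hΦd : ∀ h : ℝ, HasDerivAt Φ (Φ₁ h) h := by
    intro h
    have hq := (comp_add u hu' h).div
      ((hasDerivAt_const h (1:ℝ)).add (hE h)) (hDpos h).ne'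
    have hquad : HasDerivAt (fun t : ℝ => t ^ 2 / 4 * K) (h / 2 * K) h := by
      have := ((hasDerivAt_pow 2 h).div_const 4).mul_const K
      exact this.congr_deriv (by rw [show (2:ℕ) - 1 = 1 from rfl]; push_cast; ring)
    have := (hq.sub_const (u x / 2)).sub hquad
    rw [hΦ, hΦ₁]
    rw [zero_add] at this; exact this
  have hderivΦ : deriv Φ = Φ₁ := funext fun h => (hΦd h).deriv
  have hΦ₁c : ContDiff ℝ ∞ Φ₁ := hderivΦ ▸ (contDiff_infty_iff_deriv.1 hΦc).2
  have hFu : deriv (fun y => F y * u y) x = deriv F x * u x + F x * deriv u x :=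
    ((hF' x).hasDerivAt.mul (hu' x).hasDerivAt).deriv
  have hdΦ₁0 : deriv Φ₁ 0 = 0 := by
    have p2 : HasDerivAt (fun t : ℝ => 2 * β * t) (2 * β) (0:ℝ) := by
      simpa using (hasDerivAt_id (0:ℝ)).const_mul (2 * β)
    have hnum := ((comp_add (deriv u) hud' 0).mul
        ((hasDerivAt_const (0:ℝ) (1:ℝ)).add (hE 0))).sub
      ((comp_add u hu' 0).mul ((hE 0).mul
        (((comp_add F hF' 0).const_mul (2 * β)).add
          (p2.mul (comp_add (deriv F) hFd' 0)))))
    have hden := ((hasDerivAt_const (0:ℝ) (1:ℝ)).add (hE 0)).pow 2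
    have hdiv := hnum.div hden (pow_ne_zero 2 (hDpos 0).ne')
    have hlin : HasDerivAt (fun t : ℝ => t / 2 * K) (1 / 2 * K) (0:ℝ) := by
      simpa using ((hasDerivAt_id (0:ℝ)).div_const 2).mul_const K
    have hfull := hdiv.sub hlin
    have h00 : HasDerivAt Φ₁ 0 0 := by
      rw [hΦ₁]
      refine hfull.congr_deriv ?_
      simp only [Pi.add_apply, Pi.pow_apply, Pi.mul_apply, Pi.sub_apply, add_zero, mul_zero, zero_mul, zero_add, Real.exp_zero, mul_one, one_mul,
        Nat.cast_ofNat]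
      rw [hK, hFu]
      ring
    exact h00.deriv
  -- assemble G and its derivatives
  set G : ℝ → ℝ := fun h => Φ h + Φ (-h) with hG
  have hnegc : ContDiff ℝ ∞ (fun h : ℝ => Φ (-h)) := hΦc.comp contDiff_neg
  have hGc : ContDiff ℝ ∞ G := hΦc.add hnegc
  have hG0 : G 0 = 0 := by
    rw [hG]
    simp only [neg_zero]
    rw [hΦ]
    simp [Real.exp_zero]
    ring
  have hΦnegd : ∀ h : ℝ, HasDerivAt (fun t : ℝ => Φ (-t)) (-Φ₁ (-h)) h := by
    intro h
    have := (hΦd (-h)).comp h (hasDerivAt_neg h)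
    rw [mul_neg_one] at this; exact this
  have hGd : ∀ h : ℝ, HasDerivAt G (Φ₁ h - Φ₁ (-h)) h := by
    intro h
    have := (hΦd h).add (hΦnegd h)
    rw [hG]
    rw [← sub_eq_add_neg] at this; exact this
  have hderivG : deriv G = fun h => Φ₁ h - Φ₁ (-h) := funext fun h => (hGd h).deriv
  have hG1 : deriv G 0 = 0 := by rw [hderivG]; simp
  have hΦ₁d : ∀ t : ℝ, HasDerivAt Φ₁ (deriv Φ₁ t) t :=
    fun t => (hΦ₁c.differentiable (by norm_num) t).hasDerivAt
  have hG2d : ∀ h : ℝ, HasDerivAt (deriv G) (deriv Φ₁ h + deriv Φ₁ (-h)) h := by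
    intro h
    rw [hderivG]
    have hn : HasDerivAt (fun t : ℝ => Φ₁ (-t)) (-deriv Φ₁ (-h)) h := by
      have := (hΦ₁d (-h)).comp h (hasDerivAt_neg h)
      rw [mul_neg_one] at this; exact this
    have := (hΦ₁d h).sub hn
    rw [sub_neg_eq_add] at this; exact this
  have hderivG2 : deriv (deriv G) = fun h => deriv Φ₁ h + deriv Φ₁ (-h) :=
    funext fun h => (hG2d h).deriv
  have hG2 : deriv (deriv G) 0 = 0 := by rw [hderivG2]; simp [hdΦ₁0]
  have hΦ₂c : ContDiff ℝ ∞ (deriv Φ₁) := (contDiff_infty_iff_deriv.1 hΦ₁c).2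
  have hΦ₂d : ∀ t : ℝ, HasDerivAt (deriv Φ₁) (deriv (deriv Φ₁) t) t :=
    fun t => (hΦ₂c.differentiable (by norm_num) t).hasDerivAt
  have hG3 : deriv (deriv (deriv G)) 0 = 0 := by
    rw [hderivG2]
    have hn : HasDerivAt (fun t : ℝ => deriv Φ₁ (-t)) (-deriv (deriv Φ₁) (-0)) 0 := by
      have := (hΦ₂d (-0)).comp 0 (hasDerivAt_neg (0:ℝ))
      rw [mul_neg_one] at this; exact this
    have := ((hΦ₂d 0).add hn).deriv
    rw [show (fun h => deriv Φ₁ h + deriv Φ₁ (-h)) = deriv Φ₁ + fun t => deriv Φ₁ (-t) from rfl, this]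
    simp
  -- smoothness chain
  have hGdiff : Differentiable ℝ G := hGc.differentiable (by norm_num)
  have hG1c : ContDiff ℝ ∞ (deriv G) := (contDiff_infty_iff_deriv.1 hGc).2
  have hG1diff : Differentiable ℝ (deriv G) := hG1c.differentiable (by norm_num)
  have hG2c : ContDiff ℝ ∞ (deriv (deriv G)) := (contDiff_infty_iff_deriv.1 hG1c).2
  have hG2diff : Differentiable ℝ (deriv (deriv G)) := hG2c.differentiable (by norm_num)
  have hG3c : ContDiff ℝ ∞ (deriv (deriv (deriv G))) := (contDiff_infty_iff_deriv.1 hG2c).2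
  have hG3diff : Differentiable ℝ (deriv (deriv (deriv G))) := hG3c.differentiable (by norm_num)
  have hG4cont : Continuous (deriv (deriv (deriv (deriv G)))) :=
    ((contDiff_infty_iff_deriv.1 hG3c).2).continuous
  -- iterate the big-O step
  have hO0 : deriv (deriv (deriv (deriv G))) =O[nhds 0] fun h : ℝ => h ^ 0 := by
    simpa using (hG4cont.continuousAt (x := (0:ℝ))).isBigO_one ℝ
  have b0 := dtrw_step hG3diff hG3 hO0
  have b1 := dtrw_step hG2diff hG2 b0
  have b2 := dtrw_step hG1diff hG1 b1
  have b3 := dtrw_step hGdiff hG0 b2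
  exact b3
end
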